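/- arXiv:1509.08628 — 5 statements merged into one kernel-verified Lean document; each statement's English description precedes it below -/
import Mathlib

section
/- Let S = {(w_1,v_1),...,(w_n,v_n)} with positive integer weights and values, let l = \sum_i v_i, and let k, b be positive integers with k \le l. Consider a weighted plurality election with candidates {A, B, h}: one unbribable voter of weight l + k - 1 voting for h, one unbribable voter of weight l voting for B, and for each i a voter of weight v_i voting for A whose bribery cost is w_i. A briber with budget b may change any subset T of the bribable voters to vote for B at total cost \sum_{i \in T} w_i. Then the briber can ensure that h is not a (co-)winner if and only if there exists T \subseteq {1,...,n} with \sum_{i \in T} w_i \le b and \sum_{i \in T} v_i \ge k. -/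
/-!
Bribing only moves weight from `A` to `B`, so `A` never overtakes `h` (whose score is at least
`l` since `k ≥ 1`) and `h` is never beaten by itself. Hence `h` loses exactly when `B` overtakes
it, i.e. when `l + ∑_{i ∈ T} v i > l + k - 1`, i.e. when `∑_{i ∈ T} v i ≥ k`.
-/

def bribedScore (l k s : ℕ) : Fin 3 → ℕ :=
  fun c => if c = 0 then l - s else if c = 1 then l + s else l + k - 1

section

variable {l k s : ℕ}

theorem bribedScore_zero_le_two (hk : 0 < k) : bribedScore l k s 0 ≤ bribedScore l k s 2 :=
  show l - s ≤ l + k - 1 by omega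

theorem bribedScore_two_lt_one_iff (hk : 0 < k) :
    bribedScore l k s 2 < bribedScore l k s 1 ↔ k ≤ s :=
  show l + k - 1 < l + s ↔ k ≤ s by omega

theorem exists_bribedScore_gt_two_iff (hk : 0 < k) :
    (∃ c, bribedScore l k s c > bribedScore l k s 2) ↔ k ≤ s := by
  rw [← bribedScore_two_lt_one_iff hk]
  constructor
  · rintro ⟨c, hc⟩
    fin_cases c
    · exact absurd hc (bribedScore_zero_le_two hk).not_gt
    · exact hc
    · exact absurd hc (lt_irrefl _)
  · exact fun h => ⟨1, h⟩

end

theorem knapsack_plurality_reduction_general (n : ℕ) (w v : Fin n → ℕ)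
    (k b l : ℕ) (hk : 0 < k) :
    (∃ T : Finset (Fin n), ∑ i ∈ T, w i ≤ b ∧
        ∃ c : Fin 3,
          (fun c' : Fin 3 => if c' = 0 then l - ∑ i ∈ T, v i
            else if c' = 1 then l + ∑ i ∈ T, v i else l + k - 1) c >
          (fun c' : Fin 3 => if c' = 0 then l - ∑ i ∈ T, v i
            else if c' = 1 then l + ∑ i ∈ T, v i else l + k - 1) 2) ↔
      (∃ T : Finset (Fin n), ∑ i ∈ T, w i ≤ b ∧ k ≤ ∑ i ∈ T, v i) :=
  exists_congr fun _ => and_congr_right fun _ => exists_bribedScore_gt_two_iff hk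

/-- Knapsack reduction for weighted destructive bribery under One-Step-Plurality.
Candidates are `A = 0`, `B = 1`, `h = 2` (elements of `Fin 3`).  Initially
`score A = l`, `score B = l`, `score h = l + k - 1` with `l = ∑ v i`.  Bribing a set `T`
of the object-voters (at cost `∑_{i ∈ T} w i`) moves their weight `∑_{i ∈ T} v i` from
`A` to `B`.  Candidate `h` is not a (co-)winner iff some candidate has strictly greater
score.  The briber succeeds within budget `b` iff the Knapsack instance has a solution. -/
theorem knapsack_plurality_reduction (n : ℕ) (w v : Fin n → ℕ)
    (hw : ∀ i, 0 < w i) (hv : ∀ i, 0 < v i)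
    (k b l : ℕ) (hk : 0 < k) (hb : 0 < b) (hl : l = ∑ i, v i) (hkl : k ≤ l) :
    (∃ T : Finset (Fin n), ∑ i ∈ T, w i ≤ b ∧
        ∃ c : Fin 3,
          (fun c' : Fin 3 => if c' = 0 then l - ∑ i ∈ T, v i
            else if c' = 1 then l + ∑ i ∈ T, v i else l + k - 1) c >
          (fun c' : Fin 3 => if c' = 0 then l - ∑ i ∈ T, v i
            else if c' = 1 then l + ∑ i ∈ T, v i else l + k - 1) 2) ↔
      (∃ T : Finset (Fin n), ∑ i ∈ T, w i ≤ b ∧ k ≤ ∑ i ∈ T, v i) :=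
  knapsack_plurality_reduction_general n w v k b l hk
end

section
/- Let S = {(w_1,v_1),...,(w_n,v_n)}, l = \sum_i v_i, and k \le l, b positive integers. Consider a weighted veto election over candidates {c_1, c_2, c^*, h} with: two unbribable voters of weight 2l vetoing c_1 and c_2 respectively, one unbribable voter of weight l vetoing c^*, one unbribable voter of weight 2l - 2k + 1 vetoing h, and for each i a bribable voter of weight v_i vetoing c^* at bribery cost w_i, who can be bribed to veto h instead. A candidate's score is 4l + \sum of all weights minus the total weight of vetoes against it, equivalently each candidate loses the weight vetoing it; h loses iff some candidate has fewer total veto weight than h. Then the briber can make h lose within budget b if and only if there exists T with \sum_{i\in T} w_i \le b and \sum_{i\in T} v_i \ge k. -/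
/-- Total veto weights of `c₁, c₂, c*, h`, encoded as `0, 1, 2, 3 : Fin 4`, once bribed voters
of total weight `s` have moved their vetoes from `c*` to `h`. -/
def bribedVetoWeight (l k s : ℕ) : Fin 4 → ℕ := fun c =>
  if c = 0 then 2 * l else if c = 1 then 2 * l
  else if c = 2 then 2 * l - s
  else 2 * l - 2 * k + 1 + s

/-- Since `c₁` and `c₂` only beat `h` once `s ≥ 2k`, the decisive comparison is `c*` against `h`:
`2l - s < 2l - 2k + 1 + s` exactly when `k ≤ s`. -/
theorem exists_bribedVetoWeight_lt_iff {l k s : ℕ} (hkl : k ≤ l) :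
    (∃ c, bribedVetoWeight l k s c < bribedVetoWeight l k s 3) ↔ k ≤ s := by
  constructor
  · rintro ⟨c, hc⟩
    fin_cases c <;> simp [bribedVetoWeight] at hc <;> omega
  · intro hks
    exact ⟨2, by simp [bribedVetoWeight]; omega⟩

theorem knapsack_veto_reduction_general (n : ℕ) (w v : Fin n → ℕ)
    (k b l : ℕ) (hkl : k ≤ l) :
    (∃ T : Finset (Fin n), ∑ i ∈ T, w i ≤ b ∧
        ∃ c : Fin 4,
          (fun c' : Fin 4 => if c' = 0 then 2 * l else if c' = 1 then 2 * l
            else if c' = 2 then 2 * l - ∑ i ∈ T, v i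
            else 2 * l - 2 * k + 1 + ∑ i ∈ T, v i) c <
          (fun c' : Fin 4 => if c' = 0 then 2 * l else if c' = 1 then 2 * l
            else if c' = 2 then 2 * l - ∑ i ∈ T, v i
            else 2 * l - 2 * k + 1 + ∑ i ∈ T, v i) 3) ↔
      (∃ T : Finset (Fin n), ∑ i ∈ T, w i ≤ b ∧ k ≤ ∑ i ∈ T, v i) :=
  exists_congr fun _ => and_congr_right fun _ => exists_bribedVetoWeight_lt_iff hkl

/-- Knapsack reduction for weighted destructive bribery under One-Step-Veto.
Candidates are `c₁ = 0`, `c₂ = 1`, `c* = 2`, `h = 3` (elements of `Fin 4`).  Initial total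
veto weights: `c₁ : 2l`, `c₂ : 2l`, `c* : 2l` and `h : 2l - 2k + 1`, with `l = ∑ v i`.
Bribing a set `T` of object-voters (cost `∑_{i ∈ T} w i`) moves veto weight `∑_{i ∈ T} v i`
from `c*` to `h`.  Candidate `h` loses iff some candidate has strictly smaller total veto
weight.  The briber can make `h` lose within budget `b` iff the Knapsack instance has a
solution. -/
theorem knapsack_veto_reduction (n : ℕ) (w v : Fin n → ℕ)
    (hw : ∀ i, 0 < w i) (hv : ∀ i, 0 < v i)
    (k b l : ℕ) (hk : 0 < k) (hb : 0 < b) (hl : l = ∑ i, v i) (hkl : k ≤ l) :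
    (∃ T : Finset (Fin n), ∑ i ∈ T, w i ≤ b ∧
        ∃ c : Fin 4,
          (fun c' : Fin 4 => if c' = 0 then 2 * l else if c' = 1 then 2 * l
            else if c' = 2 then 2 * l - ∑ i ∈ T, v i
            else 2 * l - 2 * k + 1 + ∑ i ∈ T, v i) c <
          (fun c' : Fin 4 => if c' = 0 then 2 * l else if c' = 1 then 2 * l
            else if c' = 2 then 2 * l - ∑ i ∈ T, v i
            else 2 * l - 2 * k + 1 + ∑ i ∈ T, v i) 3) ↔
      (∃ T : Finset (Fin n), ∑ i ∈ T, w i ≤ b ∧ k ≤ ∑ i ∈ T, v i) :=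
  knapsack_veto_reduction_general n w v k b l hkl
end

section
/- Let \sigma be a satisfying assignment of an NAE-3SAT instance with m clauses, and consider the base reduction profile: for each clause, 6 voters corresponding to the 6 NAE-satisfying assignments of that clause's three variables, and m - 1 voters voting for h. Then for each clause there exists at least one of its 6 associated voters whose vote agrees with \sigma on the clause's three variables; consequently, bribing one such voter per clause to vote for the candidate corresponding to \sigma yields a candidate with m points, strictly exceeding h's m - 1 points. -/
/-!
There are exactly six not-all-equal assignments to three variables, so the six pairwise distinct
NAE votes of a clause exhaust them, and one of them is the restriction of `σ`. Bribing that voter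
of each clause to vote `σ` gives `σ` one point per clause.
-/

def IsNAE {α : Type*} (f : α → Bool) : Prop :=
  (∃ a, f a = true) ∧ ∃ a, f a = false

instance : DecidablePred (IsNAE : (Fin 3 → Bool) → Prop) :=
  fun _ => inferInstanceAs (Decidable (_ ∧ _))

lemma card_isNAE_fin_three : Fintype.card {f : Fin 3 → Bool // IsNAE f} = 6 := by
  decide

lemma exists_eq_of_injective_isNAE {f : Fin 6 → Fin 3 → Bool} (hf : Function.Injective f)
    (hnae : ∀ s, IsNAE (f s)) {g : Fin 3 → Bool} (hg : IsNAE g) : ∃ s, f s = g := by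
  let F : Fin 6 → {f : Fin 3 → Bool // IsNAE f} := fun s => ⟨f s, hnae s⟩
  have hF : Function.Bijective F :=
    (Fintype.bijective_iff_injective_and_card F).mpr
      ⟨fun s s' h => hf (congrArg Subtype.val h), by simp [card_isNAE_fin_three]⟩
  obtain ⟨s, hs⟩ := hF.surjective ⟨g, hg⟩
  exact ⟨s, congrArg Subtype.val hs⟩

lemma card_le_card_update_eq {ι κ β : Type*} [Finite ι] [Finite κ] [DecidableEq κ]
    (vote : ι → κ → β) (g : ι → κ) (b : β) :
    Nat.card ι ≤ Nat.card {p : ι × κ // Function.update (vote p.1) (g p.1) b p.2 = b} :=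
  Nat.card_le_card_of_injective (fun i => ⟨(i, g i), Function.update_self _ _ _⟩)
    fun _ _ h => congrArg (fun p => p.1.1) h

theorem base_reduction_forward_general (nv mc : ℕ) (hmc : 1 ≤ mc)
    (vars : Fin mc → Fin 3 → Fin nv)
    (σ : Fin nv → Bool)
    (vote : Fin mc → Fin 6 → (Fin nv → Bool))
    (hdist : ∀ i : Fin mc, ∀ s s' : Fin 6,
        (∀ t : Fin 3, vote i s (vars i t) = vote i s' (vars i t)) → s = s')
    (hnae : ∀ i s, (∃ t : Fin 3, vote i s (vars i t) = true) ∧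
        (∃ t : Fin 3, vote i s (vars i t) = false))
    (hσ : ∀ i : Fin mc,
        (∃ t : Fin 3, σ (vars i t) = true) ∧ (∃ t : Fin 3, σ (vars i t) = false)) :
    (∀ i : Fin mc, ∃ s : Fin 6, ∀ t : Fin 3, vote i s (vars i t) = σ (vars i t)) ∧
    (∃ vote' : Fin mc → Fin 6 → (Fin nv → Bool),
        (∀ i s (t : Fin 3), vote' i s (vars i t) = vote i s (vars i t)) ∧
        mc ≤ Nat.card {p : Fin mc × Fin 6 // vote' p.1 p.2 = σ} ∧
        mc - 1 < Nat.card {p : Fin mc × Fin 6 // vote' p.1 p.2 = σ}) := by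
  have agree : ∀ i, ∃ s : Fin 6, ∀ t : Fin 3, vote i s (vars i t) = σ (vars i t) := by
    intro i
    obtain ⟨s, hs⟩ := exists_eq_of_injective_isNAE (f := fun s t => vote i s (vars i t))
      (fun s s' h => hdist i s s' (congrFun h)) (hnae i) (hσ i)
    exact ⟨s, congrFun hs⟩
  choose g hg using agree
  have hcard := card_le_card_update_eq vote g σ
  rw [Nat.card_eq_fintype_card, Fintype.card_fin] at hcard
  refine ⟨fun i => ⟨g i, hg i⟩, fun i => Function.update (vote i) (g i) σ, ?_, hcard,
    Nat.sub_one_lt_of_le hmc hcard⟩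
  intro i s t
  rcases eq_or_ne s (g i) with rfl | hs
  · simp [hg]
  · simp [hs]

/-- Forward direction of the base reduction.  Let `σ` be an NAE-satisfying assignment of an
instance with `mc` clauses, and consider the base-reduction profile: for each clause `i`,
six voters `(i, s)` whose votes restricted to clause `i`'s three variables are pairwise
distinct NAE-satisfying assignments; `mc - 1` voters vote for `h ≠ σ`.  Then for each clause
there is at least one of its six voters agreeing with `σ` on that clause's three variables;
consequently the briber can change votes (each clause-voter's new vote agreeing with the
original on the clause's variables) so that candidate `σ` gets at least `mc` points, strictly
exceeding the `mc - 1` points of `h`. -/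
theorem base_reduction_forward (nv mc : ℕ) (hmc : 1 ≤ mc)
    (vars : Fin mc → Fin 3 → Fin nv) (hvars : ∀ i, Function.Injective (vars i))
    (h σ : Fin nv → Bool) (hσh : σ ≠ h)
    (vote : Fin mc → Fin 6 → (Fin nv → Bool))
    (hdist : ∀ i : Fin mc, ∀ s s' : Fin 6,
        (∀ t : Fin 3, vote i s (vars i t) = vote i s' (vars i t)) → s = s')
    (hnae : ∀ i s, (∃ t : Fin 3, vote i s (vars i t) = true) ∧
        (∃ t : Fin 3, vote i s (vars i t) = false))
    (hσ : ∀ i : Fin mc,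
        (∃ t : Fin 3, σ (vars i t) = true) ∧ (∃ t : Fin 3, σ (vars i t) = false)) :
    (∀ i : Fin mc, ∃ s : Fin 6, ∀ t : Fin 3, vote i s (vars i t) = σ (vars i t)) ∧
    (∃ vote' : Fin mc → Fin 6 → (Fin nv → Bool),
        (∀ i s (t : Fin 3), vote' i s (vars i t) = vote i s (vars i t)) ∧
        mc ≤ Nat.card {p : Fin mc × Fin 6 // vote' p.1 p.2 = σ} ∧
        mc - 1 < Nat.card {p : Fin mc × Fin 6 // vote' p.1 p.2 = σ}) :=
  base_reduction_forward_general nv mc hmc vars σ vote hdist hnae hσ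
end

section
/- Conversely, in the base reduction profile, if after changing the votes of some clause-voters (each clause-voter's new vote must agree with their original vote on their clause's three variables, and the m-1 h-voters are unchanged) some candidate c \ne h obtains at least m points, then the assignment corresponding to c NAE-satisfies every clause, i.e., the NAE-3SAT instance is satisfiable. -/
/-! Two voters of the same clause have distinct restrictions to its variables, so at most one
of them can vote for a fixed candidate `c`; hence `c` gets at most `mc` points. Reaching `mc`
forces exactly one voter of every clause to vote `c`, and that voter's restriction to the
clause — which is also `c`'s — is NAE-satisfying. -/

theorem forall_exists_of_card_le_of_subsingleton {ι κ : Type*} [Finite ι] (P : ι → κ → Prop)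
    (huniq : ∀ i, {s | P i s}.Subsingleton)
    (hcard : Nat.card ι ≤ Nat.card {p : ι × κ // P p.1 p.2}) :
    ∀ i, ∃ s, P i s := by
  let fst : {p : ι × κ // P p.1 p.2} → ι := fun p => p.1.1
  have hinj : Function.Injective fst := by
    rintro ⟨⟨i, s⟩, hs⟩ ⟨⟨i', s'⟩, hs'⟩ (rfl : i = i')
    obtain rfl := huniq i hs hs'
    rfl
  intro i
  obtain ⟨⟨⟨_, s⟩, hs⟩, rfl⟩ := (hinj.bijective_of_nat_card_le hcard).2 i
  exact ⟨s, hs⟩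

theorem base_reduction_backward_general (nv mc : ℕ)
    (vars : Fin mc → Fin 3 → Fin nv)
    (vote : Fin mc → Fin 6 → (Fin nv → Bool))
    (hdist : ∀ i : Fin mc, ∀ s s' : Fin 6,
        (∀ t : Fin 3, vote i s (vars i t) = vote i s' (vars i t)) → s = s')
    (hnae : ∀ i s, (∃ t : Fin 3, vote i s (vars i t) = true) ∧
        (∃ t : Fin 3, vote i s (vars i t) = false))
    (vote' : Fin mc → Fin 6 → (Fin nv → Bool))
    (hagree : ∀ i s (t : Fin 3), vote' i s (vars i t) = vote i s (vars i t))
    (c : Fin nv → Bool)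
    (hscore : mc ≤ Nat.card {p : Fin mc × Fin 6 // vote' p.1 p.2 = c}) :
    ∀ i : Fin mc,
      (∃ t : Fin 3, c (vars i t) = true) ∧ (∃ t : Fin 3, c (vars i t) = false) := by
  have hc_eq : ∀ i s, vote' i s = c → ∀ t, c (vars i t) = vote i s (vars i t) := by
    rintro i s rfl t
    exact hagree i s t
  have huniq : ∀ i, {s | vote' i s = c}.Subsingleton := fun i s hs s' hs' =>
    hdist i s s' fun t => (hc_eq i s hs t).symm.trans (hc_eq i s' hs' t)
  intro i
  obtain ⟨s, hs⟩ := forall_exists_of_card_le_of_subsingleton (fun i s => vote' i s = c) huniq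
    (by rwa [Nat.card_fin]) i
  obtain ⟨⟨t₁, ht₁⟩, ⟨t₂, ht₂⟩⟩ := hnae i s
  exact ⟨⟨t₁, (hc_eq i s hs t₁).trans ht₁⟩, ⟨t₂, (hc_eq i s hs t₂).trans ht₂⟩⟩

/-- Backward direction of the base reduction.  In the base-reduction profile (six voters per
clause whose restrictions to the clause's three variables are pairwise distinct NAE-satisfying
assignments, plus `mc - 1` unchanged voters for `h`), suppose the clause-voters' votes are
changed to `vote'`, where each new vote agrees with the original on the clause's three
variables.  If some candidate `c ≠ h` obtains at least `mc` points, then the assignment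
corresponding to `c` NAE-satisfies every clause, i.e. the NAE-3SAT instance is satisfiable. -/
theorem base_reduction_backward (nv mc : ℕ) (hmc : 1 ≤ mc)
    (vars : Fin mc → Fin 3 → Fin nv) (hvars : ∀ i, Function.Injective (vars i))
    (h : Fin nv → Bool)
    (vote : Fin mc → Fin 6 → (Fin nv → Bool))
    (hdist : ∀ i : Fin mc, ∀ s s' : Fin 6,
        (∀ t : Fin 3, vote i s (vars i t) = vote i s' (vars i t)) → s = s')
    (hnae : ∀ i s, (∃ t : Fin 3, vote i s (vars i t) = true) ∧
        (∃ t : Fin 3, vote i s (vars i t) = false))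
    (vote' : Fin mc → Fin 6 → (Fin nv → Bool))
    (hagree : ∀ i s (t : Fin 3), vote' i s (vars i t) = vote i s (vars i t))
    (c : Fin nv → Bool) (hch : c ≠ h)
    (hscore : mc ≤ Nat.card {p : Fin mc × Fin 6 // vote' p.1 p.2 = c}) :
    ∀ i : Fin mc,
      (∃ t : Fin 3, c (vars i t) = true) ∧ (∃ t : Fin 3, c (vars i t) = false) :=
  base_reduction_backward_general nv mc vars vote hdist hnae vote' hagree c hscore
end

section
/- Under One-Step-k-Approval with k = 2^j over an O-legal profile with common issue order X_1 > ... > X_m, candidate c is among a voter's top k candidates if and only if c agrees with the voter's top candidate on the first m - j issues. Consequently, the score of every candidate in the election depends only on the restriction of the profile to the first m - j issues, and any bribery that modifies only preferences on the last j issues leaves all candidates' approval scores unchanged. -/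
/-! By O-legality, the preferred value `P i c` of issue `i` depends only on the issues before `i`.
Call issue `i` *bad* for `c` if `c i ≠ P i c`. The candidates preferred to `c` are those that
agree with `c` before some bad issue `i`, flip it, and are arbitrary afterwards: `2 ^ (m - 1 - i)`
of them for each bad `i`. Hence `c` has fewer than `2 ^ j` candidates above it exactly when no
issue among the first `m - j` is bad, which by induction on issues means that `c` agrees there
with the top candidate. That condition reads only the CP-tables of the first `m - j` issues. -/

namespace LexCPNet

section Splice

variable {β : Type*} {m : ℕ}

def tail (n : ℕ) (a : Fin m → β) : Fin (m - n) → β :=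
  fun s => a ⟨n + s, by omega⟩

def splice (n : ℕ) (a : Fin m → β) (g : Fin (m - n) → β) : Fin m → β :=
  fun k => if h : (k : ℕ) < n then a k else g ⟨k - n, by omega⟩

theorem splice_of_lt {n : ℕ} (a : Fin m → β) (g : Fin (m - n) → β) {k : Fin m}
    (hk : (k : ℕ) < n) : splice n a g k = a k :=
  dif_pos hk

theorem tail_splice (n : ℕ) (a : Fin m → β) (g : Fin (m - n) → β) :
    tail n (splice n a g) = g := by
  funext s
  simp [tail, splice]

theorem splice_injective (n : ℕ) (a : Fin m → β) : Function.Injective (splice n a) :=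
  Function.LeftInverse.injective (tail_splice n a)

theorem eq_of_forall_lt_eq_of_tail_eq {n : ℕ} {a b : Fin m → β}
    (hlt : ∀ k : Fin m, (k : ℕ) < n → a k = b k) (htail : tail n a = tail n b) : a = b := by
  funext k
  by_cases hk : (k : ℕ) < n
  · exact hlt k hk
  · have := congrFun htail ⟨k - n, by omega⟩
    simp only [tail] at this
    convert this using 2 <;> ext <;> simp only <;> omega

end Splice

variable {m : ℕ} {P : Fin m → (Fin m → Bool) → Bool}

def IsOLegal (P : Fin m → (Fin m → Bool) → Bool) : Prop :=
  ∀ (i : Fin m) (a b : Fin m → Bool), (∀ k : Fin m, k < i → a k = b k) → P i a = P i b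

def Prefers (P : Fin m → (Fin m → Bool) → Bool) (c' c : Fin m → Bool) : Prop :=
  ∃ i : Fin m, (∀ k : Fin m, k < i → c' k = c k) ∧ c' i ≠ c i ∧ c' i = P i c'

theorem Prefers.ne {c' c : Fin m → Bool} (h : Prefers P c' c) : c' ≠ c := fun heq => by
  obtain ⟨i, -, hne, -⟩ := h
  exact hne (congrFun heq i)

theorem IsOLegal.forall_lt_eq_top_iff (hP : IsOLegal P) {top : Fin m → Bool}
    (htop : ∀ i, top i = P i top) (n : ℕ) (c : Fin m → Bool) :
    (∀ i : Fin m, (i : ℕ) < n → c i = top i) ↔ ∀ i : Fin m, (i : ℕ) < n → c i = P i c := by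
  constructor
  · intro h i hi
    rw [h i hi, htop, hP i top c fun k hk => (h k (by omega)).symm]
  · intro h i
    induction i using WellFoundedLT.induction with
    | ind i ih =>
      intro hi
      rw [h i hi, htop, hP i c top fun k hk => ih k hk (by omega)]

theorem IsOLegal.prefers_forall_lt_eq (hP : IsOLegal P) {n : ℕ} {c c' : Fin m → Bool}
    (hc : ∀ i : Fin m, (i : ℕ) < n → c i = P i c) (h : Prefers P c' c) :
    ∀ k : Fin m, (k : ℕ) < n → c' k = c k := by
  obtain ⟨i, hlt, hne, hpref⟩ := h
  have hi : n ≤ i := by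
    by_contra! hi
    exact hne (by rw [hpref, hP i c' c hlt, hc i hi])
  exact fun k hk => hlt k (by omega)

theorem IsOLegal.card_prefers_lt (hP : IsOLegal P) (n : ℕ) {c : Fin m → Bool}
    (hc : ∀ i : Fin m, (i : ℕ) < n → c i = P i c) :
    Nat.card {c' // Prefers P c' c} < 2 ^ (m - n) := by
  have hagree := fun c' : {c' // Prefers P c' c} => hP.prefers_forall_lt_eq hc c'.2
  have htail_ne : ∀ c' : {c' // Prefers P c' c}, tail n c'.1 ≠ tail n c :=
    fun c' h => c'.2.ne (eq_of_forall_lt_eq_of_tail_eq (hagree c') h)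
  have hinj : Function.Injective fun c' => (⟨tail n c'.1, htail_ne c'⟩ : {g // g ≠ tail n c}) :=
    fun c₁ c₂ h => Subtype.ext <| eq_of_forall_lt_eq_of_tail_eq
      (fun k hk => (hagree c₁ k hk).trans (hagree c₂ k hk).symm) (congrArg Subtype.val h)
  calc Nat.card {c' // Prefers P c' c}
      ≤ Nat.card {g // g ≠ tail n c} := Nat.card_le_card_of_injective _ hinj
    _ < Nat.card (Fin (m - n) → Bool) := Finite.card_subtype_lt (not_not.mpr rfl)
    _ = 2 ^ (m - n) := by simp

theorem IsOLegal.pow_le_card_prefers (hP : IsOLegal P) {c : Fin m → Bool} {i : Fin m}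
    (hi : c i ≠ P i c) :
    2 ^ (m - (i + 1)) ≤ Nat.card {c' // Prefers P c' c} := by
  have hflip_lt : ∀ (g : Fin (m - (i + 1)) → Bool) (k : Fin m), k < i →
      splice (i + 1) (Function.update c i (!c i)) g k = c k := fun g k hk => by
    rw [splice_of_lt _ _ (by omega), Function.update_of_ne hk.ne]
  have hflip_i : ∀ g : Fin (m - (i + 1)) → Bool,
      splice (i + 1) (Function.update c i (!c i)) g i = !c i := fun g => by
    rw [splice_of_lt _ _ (by omega), Function.update_self]
  have hmem : ∀ g, Prefers P (splice (i + 1) (Function.update c i (!c i)) g) c := fun g =>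
    ⟨i, hflip_lt g, by rw [hflip_i]; exact Bool.not_ne_self (c i), by
      rw [hflip_i, hP i _ c (hflip_lt g)]
      exact Bool.not_eq_iff.mpr hi⟩
  calc 2 ^ (m - (i + 1)) = Nat.card (Fin (m - (i + 1)) → Bool) := by simp
    _ ≤ Nat.card {c' // Prefers P c' c} :=
      Nat.card_le_card_of_injective (fun g => ⟨_, hmem g⟩)
        fun g₁ g₂ h => splice_injective _ _ (congrArg Subtype.val h)

theorem IsOLegal.card_prefers_lt_pow_iff (hP : IsOLegal P) (j : ℕ) (c : Fin m → Bool) :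
    Nat.card {c' // Prefers P c' c} < 2 ^ j ↔ ∀ i : Fin m, (i : ℕ) < m - j → c i = P i c := by
  constructor
  · intro hcard i hi
    by_contra hne
    have := (Nat.pow_le_pow_right two_pos (by omega : j ≤ m - (i + 1))).trans
      (hP.pow_le_card_prefers hne)
    omega
  · intro hc
    exact (hP.card_prefers_lt (m - j) hc).trans_le (Nat.pow_le_pow_right two_pos (by omega))

end LexCPNet

open LexCPNet in
theorem kapproval_pow_two_score_invariance_general (m j nV : ℕ)
    (P Q : Fin nV → Fin m → (Fin m → Bool) → Bool)
    (hP : ∀ (vo : Fin nV) (i : Fin m) (a b : Fin m → Bool),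
        (∀ kk : Fin m, kk < i → a kk = b kk) → P vo i a = P vo i b)
    (hQ : ∀ (vo : Fin nV) (i : Fin m) (a b : Fin m → Bool),
        (∀ kk : Fin m, kk < i → a kk = b kk) → Q vo i a = Q vo i b)
    (topP : Fin nV → Fin m → Bool)
    (htopP : ∀ vo i, topP vo i = P vo i (topP vo))
    (hagree : ∀ (vo : Fin nV) (i : Fin m), (i : ℕ) < m - j → P vo i = Q vo i) :
    (∀ (vo : Fin nV) (c : Fin m → Bool),
      Nat.card {c' : Fin m → Bool //
          ∃ i : Fin m, (∀ kk : Fin m, kk < i → c' kk = c kk) ∧ c' i ≠ c i ∧ c' i = P vo i c'}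
        < 2 ^ j ↔
      ∀ i : Fin m, (i : ℕ) < m - j → c i = topP vo i) ∧
    (∀ c : Fin m → Bool,
      Nat.card {vo : Fin nV //
        Nat.card {c' : Fin m → Bool //
          ∃ i : Fin m, (∀ kk : Fin m, kk < i → c' kk = c kk) ∧ c' i ≠ c i ∧ c' i = P vo i c'}
          < 2 ^ j} =
      Nat.card {vo : Fin nV //
        Nat.card {c' : Fin m → Bool //
          ∃ i : Fin m, (∀ kk : Fin m, kk < i → c' kk = c kk) ∧ c' i ≠ c i ∧ c' i = Q vo i c'}
          < 2 ^ j}) := by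
  have hPl : ∀ vo, IsOLegal (P vo) := hP
  have hQl : ∀ vo, IsOLegal (Q vo) := hQ
  refine ⟨fun vo c => ?_, fun c => Nat.card_congr <| Equiv.subtypeEquivRight fun vo => ?_⟩
  · exact ((hPl vo).card_prefers_lt_pow_iff j c).trans
      ((hPl vo).forall_lt_eq_top_iff (htopP vo) (m - j) c).symm
  · exact ((hPl vo).card_prefers_lt_pow_iff j c).trans <|
      (forall₂_congr fun i hi => by rw [hagree vo i hi]).trans
        ((hQl vo).card_prefers_lt_pow_iff j c).symm

/-- One-Step-`k`-Approval with `k = 2 ^ j` over an `O`-legal profile with common issue order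
`X_1 > ... > X_m`.  Voter `vo`'s preferences are given by `P vo i a` (preferred value of
issue `i`, depending only on earlier issues), with lexicographic top candidate `topP vo`;
the voter approves exactly the top `2 ^ j` candidates, i.e. those with fewer than `2 ^ j`
candidates preferred to them.  Then:
* a candidate `c` is among voter `vo`'s top `2 ^ j` candidates iff `c` agrees with `topP vo`
  on the first `m - j` issues;
* if a second profile `Q` differs from `P` only on the last `j` issues (i.e. agrees on all
  issues `i` with `i < m - j`), then every candidate's approval score is unchanged. -/
theorem kapproval_pow_two_score_invariance (m j nV : ℕ) (hj : j ≤ m)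
    (P Q : Fin nV → Fin m → (Fin m → Bool) → Bool)
    (hP : ∀ (vo : Fin nV) (i : Fin m) (a b : Fin m → Bool),
        (∀ kk : Fin m, kk < i → a kk = b kk) → P vo i a = P vo i b)
    (hQ : ∀ (vo : Fin nV) (i : Fin m) (a b : Fin m → Bool),
        (∀ kk : Fin m, kk < i → a kk = b kk) → Q vo i a = Q vo i b)
    (topP topQ : Fin nV → Fin m → Bool)
    (htopP : ∀ vo i, topP vo i = P vo i (topP vo))
    (htopQ : ∀ vo i, topQ vo i = Q vo i (topQ vo))
    (hagree : ∀ (vo : Fin nV) (i : Fin m), (i : ℕ) < m - j → P vo i = Q vo i) :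
    (∀ (vo : Fin nV) (c : Fin m → Bool),
      Nat.card {c' : Fin m → Bool //
          ∃ i : Fin m, (∀ kk : Fin m, kk < i → c' kk = c kk) ∧ c' i ≠ c i ∧ c' i = P vo i c'}
        < 2 ^ j ↔
      ∀ i : Fin m, (i : ℕ) < m - j → c i = topP vo i) ∧
    (∀ c : Fin m → Bool,
      Nat.card {vo : Fin nV //
        Nat.card {c' : Fin m → Bool //
          ∃ i : Fin m, (∀ kk : Fin m, kk < i → c' kk = c kk) ∧ c' i ≠ c i ∧ c' i = P vo i c'}
          < 2 ^ j} =
      Nat.card {vo : Fin nV //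
        Nat.card {c' : Fin m → Bool //
          ∃ i : Fin m, (∀ kk : Fin m, kk < i → c' kk = c kk) ∧ c' i ≠ c i ∧ c' i = Q vo i c'}
          < 2 ^ j}) :=
  kapproval_pow_two_score_invariance_general m j nV P Q hP hQ topP htopP hagree
end
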